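/- Suppose K_j is symmetric positive definite with minimum eigenvalue λ_min and that 1 − j·φ(d_min(x_{j+1}))²/λ_min > 0. Then the scaled reduction in variance satisfies the bound R(x_{j+1}) ≤ (φ(d_min(x_{j+1})) · (1 + √j · ‖K_j⁻¹ k_j(x)‖₂))² / (1 − j·φ(d_min(x_{j+1}))²/λ_min). -/

import Mathlib

open Matrix

/-- Euclidean (ℓ2) norm of a vector in ℝ^n. -/
noncomputable def enorm₂ {n : ℕ} (v : Fin n → ℝ) : ℝ := Real.sqrt (v ⬝ᵥ v)

lemma dot_self_nonneg {n : ℕ} (v : Fin n → ℝ) : 0 ≤ v ⬝ᵥ v := by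
  simp only [dotProduct]
  exact Finset.sum_nonneg fun i _ => mul_self_nonneg _

lemma sq_enorm {n : ℕ} (v : Fin n → ℝ) : enorm₂ v ^ 2 = v ⬝ᵥ v :=
  Real.sq_sqrt (dot_self_nonneg v)

lemma abs_dot_le {n : ℕ} (a b : Fin n → ℝ) : |a ⬝ᵥ b| ≤ enorm₂ a * enorm₂ b := by
  have h : (a ⬝ᵥ b) ^ 2 ≤ (a ⬝ᵥ a) * (b ⬝ᵥ b) := by
    simpa [dotProduct, pow_two, Finset.mul_sum] using
      Finset.sum_mul_sq_le_sq_mul_sq Finset.univ a b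
  calc |a ⬝ᵥ b| = Real.sqrt ((a ⬝ᵥ b) ^ 2) := (Real.sqrt_sq_eq_abs _).symm
    _ ≤ Real.sqrt ((a ⬝ᵥ a) * (b ⬝ᵥ b)) := Real.sqrt_le_sqrt h
    _ = enorm₂ a * enorm₂ b := Real.sqrt_mul (dot_self_nonneg a) _

lemma rayleigh_lower {n : ℕ} {A : Matrix (Fin n) (Fin n) ℝ} (hA : A.IsHermitian) (c : ℝ)
    (h : ∀ i, c ≤ hA.eigenvalues i) (v : Fin n → ℝ) :
    c * (v ⬝ᵥ v) ≤ v ⬝ᵥ (A *ᵥ v) := by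
  classical
  set U : Matrix (Fin n) (Fin n) ℝ := (hA.eigenvectorUnitary : Matrix (Fin n) (Fin n) ℝ) with hUdef
  have hunit : U * star U = 1 := (Matrix.mem_unitaryGroup_iff).mp hA.eigenvectorUnitary.2
  have hsU : star U = Uᵀ := by
    rw [star_eq_conjTranspose, conjTranspose_eq_transpose_of_trivial]
  set w : Fin n → ℝ := star U *ᵥ v with hw
  have hwv : w = v ᵥ* U := by rw [hw, hsU, mulVec_transpose]
  have hvv : v ⬝ᵥ v = w ⬝ᵥ w := by
    conv_rhs => rw [hw, dotProduct_mulVec, hsU, vecMul_mulVec, transpose_transpose,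
      ← hsU, hunit, vecMul_one]
  have hAv : v ⬝ᵥ (A *ᵥ v) = w ⬝ᵥ (diagonal (RCLike.ofReal ∘ hA.eigenvalues) *ᵥ w) := by
    conv_lhs => rw [hA.spectral_theorem, Unitary.conjStarAlgAut_apply]
    rw [← mulVec_mulVec, ← mulVec_mulVec, dotProduct_mulVec, ← hwv]
  rw [hvv, hAv]
  simp only [dotProduct, mulVec_diagonal, Function.comp_apply, RCLike.ofReal_real_eq_id, id_eq,
    Finset.mul_sum]
  apply Finset.sum_le_sum
  intro i _
  have := mul_le_mul_of_nonneg_right (h i) (mul_self_nonneg (w i))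
  nlinarith [mul_self_nonneg (w i)]
/-- For a radial kernel with `φ` strictly decreasing, nonnegative, `φ(0) = 1`, if
`K_j` is symmetric positive definite with minimum eigenvalue `λ_min` and
`1 − jφ(d_min)²/λ_min > 0`, then
`R(x_{j+1}) ≤ (φ(d_min)(1 + √j ‖K_j⁻¹k_j(x)‖₂))² / (1 − jφ(d_min)²/λ_min)`. -/
theorem reduction_in_variance_distance_bound (d j : ℕ)
    (Θ : Matrix (Fin d) (Fin d) ℝ) (φ : ℝ → ℝ)
    (hφanti : StrictAntiOn φ (Set.Ici 0))
    (hφnonneg : ∀ t, 0 ≤ t → 0 ≤ φ t)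
    (hφ0 : φ 0 = 1)
    (Φ : (Fin d → ℝ) → (Fin d → ℝ) → ℝ)
    (hΦ : ∀ u v, Φ u v = φ (enorm₂ (Θ *ᵥ (u - v))))
    (x : Fin d → ℝ) (xs : Fin j → (Fin d → ℝ)) (xnew : Fin d → ℝ)
    (Kj : Matrix (Fin j) (Fin j) ℝ)
    (hKj : Kj = Matrix.of fun i k => Φ (xs i) (xs k))
    (hKpd : Kj.PosDef)
    (kj : (Fin d → ℝ) → Fin j → ℝ)
    (hkj : ∀ u, kj u = fun i => Φ (xs i) u)
    (lammin : ℝ)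
    (hlam : IsLeast (Set.range hKpd.isHermitian.eigenvalues) lammin)
    (dmin : ℝ)
    (hdmin : IsLeast ({enorm₂ (Θ *ᵥ (x - xnew))} ∪
      Set.range fun i => enorm₂ (Θ *ᵥ (xs i - xnew))) dmin)
    (hpos : 0 < 1 - (j : ℝ) * φ dmin ^ 2 / lammin) :
    (Φ x xnew - kj xnew ⬝ᵥ Kj⁻¹ *ᵥ kj x) ^ 2 /
        (Φ xnew xnew - kj xnew ⬝ᵥ Kj⁻¹ *ᵥ kj xnew) ≤
      (φ dmin * (1 + Real.sqrt (j : ℝ) * enorm₂ (Kj⁻¹ *ᵥ kj x))) ^ 2 /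
        (1 - (j : ℝ) * φ dmin ^ 2 / lammin) := by
  classical
  set a := φ dmin with ha_def
  -- dmin is nonnegative
  have hd0 : 0 ≤ dmin := by
    rcases hdmin.1 with h | ⟨i, hi⟩
    · rw [Set.mem_singleton_iff] at h; rw [h]; exact Real.sqrt_nonneg _
    · rw [← hi]; exact Real.sqrt_nonneg _
  have ha : 0 ≤ a := hφnonneg dmin hd0
  have hmono : ∀ t, dmin ≤ t → φ t ≤ a := fun t ht =>
    hφanti.antitoneOn (Set.mem_Ici.2 hd0) (Set.mem_Ici.2 (hd0.trans ht)) ht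
  -- bounds on kernel values
  have hΦx_le : Φ x xnew ≤ a := by
    rw [hΦ]
    exact hmono _ (hdmin.2 (Set.mem_union_left _ rfl))
  have hΦx_nn : 0 ≤ Φ x xnew := by rw [hΦ]; exact hφnonneg _ (Real.sqrt_nonneg _)
  have hknn : ∀ i, 0 ≤ kj xnew i := by
    intro i; rw [hkj]; dsimp only; rw [hΦ]; exact hφnonneg _ (Real.sqrt_nonneg _)
  have hkle : ∀ i, kj xnew i ≤ a := by
    intro i
    rw [hkj]; dsimp only; rw [hΦ]
    exact hmono _ (hdmin.2 (Set.mem_union_right _ ⟨i, rfl⟩))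
  -- ‖k_j(xnew)‖² ≤ j a²
  have hksq : kj xnew ⬝ᵥ kj xnew ≤ (j : ℝ) * a ^ 2 := by
    have : ∀ i ∈ Finset.univ, kj xnew i * kj xnew i ≤ a ^ 2 := by
      intro i _
      rw [pow_two]
      exact mul_le_mul (hkle i) (hkle i) (hknn i) ha
    calc kj xnew ⬝ᵥ kj xnew ≤ ∑ _i : Fin j, a ^ 2 := Finset.sum_le_sum this
      _ = (j : ℝ) * a ^ 2 := by simp [Finset.sum_const, nsmul_eq_mul]
  have henormk : enorm₂ (kj xnew) ≤ Real.sqrt (j : ℝ) * a := by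
    rw [enorm₂]
    calc Real.sqrt (kj xnew ⬝ᵥ kj xnew) ≤ Real.sqrt ((j : ℝ) * a ^ 2) :=
        Real.sqrt_le_sqrt hksq
      _ = Real.sqrt (j : ℝ) * a := by
        rw [Real.sqrt_mul (Nat.cast_nonneg j), Real.sqrt_sq ha]
  -- lammin positive, and a lower bound on all eigenvalues
  have hlampos : 0 < lammin := by
    obtain ⟨i, hi⟩ := hlam.1
    rw [← hi]
    exact hKpd.eigenvalues_pos i
  have hlamle : ∀ i, lammin ≤ hKpd.isHermitian.eigenvalues i := fun i =>
    hlam.2 ⟨i, rfl⟩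
  have hdet : IsUnit Kj.det := isUnit_iff_ne_zero.2 hKpd.det_pos.ne'
  -- the quadratic form bound: q ≤ ‖k‖²/lammin ≤ j a²/lammin
  set q := kj xnew ⬝ᵥ Kj⁻¹ *ᵥ kj xnew with hq_def
  set u := Kj⁻¹ *ᵥ kj xnew with hu_def
  have hKu : Kj *ᵥ u = kj xnew := by
    rw [hu_def, mulVec_mulVec, Matrix.mul_nonsing_inv _ hdet, one_mulVec]
  have hray : lammin * (u ⬝ᵥ u) ≤ q := by
    have h := rayleigh_lower hKpd.isHermitian lammin hlamle u
    rw [hKu, dotProduct_comm u (kj xnew)] at h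
    exact h
  have hqnonneg : 0 ≤ q := by
    have h1 := hKpd.inv.posSemidef.re_dotProduct_nonneg (kj xnew)
    simpa [hq_def, dotProduct] using h1
  have hqcs : q ≤ enorm₂ (kj xnew) * enorm₂ u := by
    calc q ≤ |kj xnew ⬝ᵥ u| := le_abs_self _
      _ ≤ _ := abs_dot_le _ _
  have hqle : q ≤ (j : ℝ) * a ^ 2 / lammin := by
    rcases eq_or_lt_of_le hqnonneg with h0 | h0
    · rw [← h0]
      positivity
    · have hsq : q ^ 2 ≤ (kj xnew ⬝ᵥ kj xnew) * (u ⬝ᵥ u) := by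
        calc q ^ 2 ≤ (enorm₂ (kj xnew) * enorm₂ u) ^ 2 :=
            pow_le_pow_left₀ hqnonneg hqcs 2
          _ = (kj xnew ⬝ᵥ kj xnew) * (u ⬝ᵥ u) := by
            rw [mul_pow, sq_enorm, sq_enorm]
      have huu : u ⬝ᵥ u ≤ q / lammin := by
        rw [le_div_iff₀ hlampos, mul_comm]
        exact hray
      have hkk : 0 ≤ kj xnew ⬝ᵥ kj xnew := dot_self_nonneg _
      have h2 : q ^ 2 ≤ (kj xnew ⬝ᵥ kj xnew) * (q / lammin) :=
        hsq.trans (mul_le_mul_of_nonneg_left huu hkk)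
      have h3 : q ≤ (kj xnew ⬝ᵥ kj xnew) / lammin := by
        rw [div_eq_mul_inv] at h2 ⊢
        nlinarith [inv_pos.2 hlampos]
      calc q ≤ (kj xnew ⬝ᵥ kj xnew) / lammin := h3
        _ ≤ (j : ℝ) * a ^ 2 / lammin := by gcongr
  -- denominator bound
  have hΦnew : Φ xnew xnew = 1 := by
    rw [hΦ, sub_self, mulVec_zero]
    have : enorm₂ (0 : Fin d → ℝ) = 0 := by simp [enorm₂]
    rw [this, hφ0]
  have hden : 1 - (j : ℝ) * a ^ 2 / lammin ≤ Φ xnew xnew - q := by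
    rw [hΦnew]
    linarith
  -- numerator bound
  set e := enorm₂ (Kj⁻¹ *ᵥ kj x) with he_def
  have he : 0 ≤ e := Real.sqrt_nonneg _
  have hnum : |Φ x xnew - kj xnew ⬝ᵥ Kj⁻¹ *ᵥ kj x| ≤ a * (1 + Real.sqrt (j : ℝ) * e) := by
    have h1 : |kj xnew ⬝ᵥ Kj⁻¹ *ᵥ kj x| ≤ Real.sqrt (j : ℝ) * a * e := by
      calc |kj xnew ⬝ᵥ Kj⁻¹ *ᵥ kj x| ≤ enorm₂ (kj xnew) * e := abs_dot_le _ _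
        _ ≤ Real.sqrt (j : ℝ) * a * e := mul_le_mul_of_nonneg_right henormk he
    calc |Φ x xnew - kj xnew ⬝ᵥ Kj⁻¹ *ᵥ kj x|
        ≤ |Φ x xnew| + |kj xnew ⬝ᵥ Kj⁻¹ *ᵥ kj x| := abs_sub _ _
      _ ≤ a + Real.sqrt (j : ℝ) * a * e := by
          have : |Φ x xnew| = Φ x xnew := abs_of_nonneg hΦx_nn
          linarith
      _ = a * (1 + Real.sqrt (j : ℝ) * e) := by ring
  have hbnd : 0 ≤ a * (1 + Real.sqrt (j : ℝ) * e) := by positivity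
  have hnum2 : (Φ x xnew - kj xnew ⬝ᵥ Kj⁻¹ *ᵥ kj x) ^ 2 ≤
      (a * (1 + Real.sqrt (j : ℝ) * e)) ^ 2 := by
    rw [← sq_abs]
    exact pow_le_pow_left₀ (abs_nonneg _) hnum 2
  exact div_le_div₀ (by positivity) hnum2 hpos hden
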